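/- arXiv:2303.08855 — 7 statements merged into one kernel-verified Lean document; each statement's English description precedes it below -/
import Mathlib

section
/- Let p be a positive integer, m an integer with 0 ≤ m ≤ p, and a ∈ [0,1). Then the equation (1 − a − a²)r^{p+m} + r^p + a·r^m − 1 = 0 has exactly one root r_{p,m}(a) in the open interval (0,1). -/
/-!
Write `c = 1 - a - a²` and `A = t^p - s^p`, `B = t^m - s^m` for `0 ≤ s < t ≤ 1`. Since
`t^(p+m) - s^(p+m) = t^m A + s^p B ≤ A + B`, a negative leading coefficient `c` costs at most
`c (A + B)`, so the increment of the left-hand side is at least `(1 + c) A + (a + c) B`, and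
`1 + c = 2 - a - a² > 0`, `a + c = 1 - a² > 0`. Hence the left-hand side is strictly increasing on
`[0, 1]`; it is negative at `0` and equals `1 - a² > 0` at `1`, so it has exactly one root.
-/

open Set

theorem existsUnique_mem_Ioo_eq_of_strictMonoOn {f : ℝ → ℝ} {a b y : ℝ} (hab : a ≤ b)
    (hf : ContinuousOn f (Icc a b)) (hmono : StrictMonoOn f (Icc a b))
    (ha : f a < y) (hb : y < f b) :
    ∃! x : ℝ, x ∈ Ioo a b ∧ f x = y := by
  obtain ⟨x, hx, hfx⟩ := intermediate_value_Ioo hab hf ⟨ha, hb⟩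
  refine ⟨x, ⟨hx, hfx⟩, fun z ⟨hz, hfz⟩ => ?_⟩
  exact hmono.injOn (Ioo_subset_Icc_self hz) (Ioo_subset_Icc_self hx) (hfz.trans hfx.symm)

section Trinomial

variable {R : Type*} [CommRing R] [LinearOrder R] [IsStrictOrderedRing R]

theorem pow_add_sub_pow_add_le {s t : R} (hs : 0 ≤ s) (hst : s ≤ t) (ht : t ≤ 1) (p m : ℕ) :
    t ^ (p + m) - s ^ (p + m) ≤ (t ^ p - s ^ p) + (t ^ m - s ^ m) := by
  have hA : 0 ≤ t ^ p - s ^ p := sub_nonneg.2 (pow_le_pow_left₀ hs hst p)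
  have hB : 0 ≤ t ^ m - s ^ m := sub_nonneg.2 (pow_le_pow_left₀ hs hst m)
  calc t ^ (p + m) - s ^ (p + m) = t ^ m * (t ^ p - s ^ p) + s ^ p * (t ^ m - s ^ m) := by ring
    _ ≤ 1 * (t ^ p - s ^ p) + 1 * (t ^ m - s ^ m) := by
        gcongr
        · exact pow_le_one₀ (hs.trans hst) ht
        · exact pow_le_one₀ hs (hst.trans ht)
    _ = (t ^ p - s ^ p) + (t ^ m - s ^ m) := by ring

theorem strictMonoOn_trinomial (p m : ℕ) {b c : R} (hp : p ≠ 0) (hb : 0 ≤ b)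
    (hc : -1 < c) (hbc : 0 ≤ b + c) :
    StrictMonoOn (fun r => c * r ^ (p + m) + r ^ p + b * r ^ m) (Icc 0 1) := by
  rintro s ⟨hs, -⟩ t ⟨-, ht⟩ hst
  have hA : 0 < t ^ p - s ^ p := sub_pos.2 (pow_lt_pow_left₀ hst hs hp)
  have hB : 0 ≤ t ^ m - s ^ m := sub_nonneg.2 (pow_le_pow_left₀ hs hst.le m)
  have hX : 0 ≤ t ^ (p + m) - s ^ (p + m) := sub_nonneg.2 (pow_le_pow_left₀ hs hst.le _)
  have hXAB := pow_add_sub_pow_add_le hs hst.le ht p m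
  rcases le_or_gt 0 c with hc0 | hc0
  · nlinarith [mul_nonneg hc0 hX, mul_nonneg hb hB]
  · nlinarith [mul_le_mul_of_nonpos_left hXAB hc0.le, mul_nonneg hbc hB]

end Trinomial

theorem stmt_1_general (p m : ℕ) (hp : 1 ≤ p) (a : ℝ) (ha : a ∈ Set.Ico (0:ℝ) 1) :
    ∃! r : ℝ, r ∈ Set.Ioo (0:ℝ) 1 ∧
      (1 - a - a ^ 2) * r ^ (p + m) + r ^ p + a * r ^ m - 1 = 0 := by
  obtain ⟨ha0, ha1⟩ := ha
  simp only [sub_eq_zero]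
  have hmono := strictMonoOn_trinomial p m (b := a) (c := 1 - a - a ^ 2) (by omega) ha0
    (by nlinarith) (by nlinarith)
  refine existsUnique_mem_Ioo_eq_of_strictMonoOn zero_le_one (by fun_prop) hmono ?_ ?_
  · have h0 : (0 : ℝ) ^ m ≤ 1 := pow_le_one₀ le_rfl zero_le_one
    simp only [zero_pow (by omega : p + m ≠ 0), zero_pow (by omega : p ≠ 0)]
    nlinarith
  · simp only [one_pow]
    nlinarith

theorem stmt_1 (p m : ℕ) (hp : 1 ≤ p) (hm : m ≤ p) (a : ℝ) (ha : a ∈ Set.Ico (0:ℝ) 1) :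
    ∃! r : ℝ, r ∈ Set.Ioo (0:ℝ) 1 ∧
      (1 - a - a ^ 2) * r ^ (p + m) + r ^ p + a * r ^ m - 1 = 0 :=
  stmt_1_general p m hp a ha
end

section
/- Let p ≥ 1, 0 ≤ m ≤ p, and a ∈ [0,1). The unique root r_{p,m}(a) ∈ (0,1) of (1 − a − a²)r^{p+m} + r^p + a·r^m − 1 = 0 satisfies r_{p,m}(a) ≥ (1/(2+a))^{1/p}. -/
/-! Write `x = r ^ p` and `y = r ^ m`. The equation says `y * (a + (1 - a - a²) x) = 1 - x`, so the
factor `a + (1 - a - a²) x` is nonnegative, and since `y ≤ 1` it is at least `1 - x`. That is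
`(1 - a) ((2 + a) x - 1) ≥ 0`, i.e. `x ≥ 1 / (2 + a)`. -/

theorem one_le_two_add_mul_of_mul_eq_one_sub {a x y : ℝ} (ha : a < 1) (hy0 : 0 < y) (hy1 : y ≤ 1)
    (hx : x ≤ 1) (h : y * (a + (1 - a - a ^ 2) * x) = 1 - x) : 1 ≤ (2 + a) * x := by
  have hfactor : 0 ≤ a + (1 - a - a ^ 2) * x :=
    nonneg_of_mul_nonneg_right (h ▸ sub_nonneg.2 hx) hy0
  have hge : 1 - x ≤ a + (1 - a - a ^ 2) * x := h ▸ mul_le_of_le_one_left hfactor hy1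
  have hprod : 0 ≤ (1 - a) * ((2 + a) * x - 1) := by linarith
  linarith [nonneg_of_mul_nonneg_right hprod (sub_pos.2 ha)]

theorem Real.rpow_one_div_natCast_le_of_le_pow {b r : ℝ} {p : ℕ} (hb : 0 ≤ b) (hr : 0 ≤ r)
    (hp : p ≠ 0) (h : b ≤ r ^ p) : b ^ ((1 : ℝ) / p) ≤ r := by
  rw [one_div, Real.rpow_inv_le_iff_of_pos hb hr (by positivity), Real.rpow_natCast]
  exact h

theorem stmt_2_general (p m : ℕ) (hp : 1 ≤ p) (a : ℝ) (ha : a ∈ Set.Ico (0:ℝ) 1)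
    (r : ℝ) (hr : r ∈ Set.Ioo (0:ℝ) 1)
    (hroot : (1 - a - a ^ 2) * r ^ (p + m) + r ^ p + a * r ^ m - 1 = 0) :
    (1 / (2 + a)) ^ ((1:ℝ) / p) ≤ r := by
  obtain ⟨hr0, hr1⟩ := hr
  obtain ⟨ha0, ha1⟩ := ha
  have hfactored : r ^ m * (a + (1 - a - a ^ 2) * r ^ p) = 1 - r ^ p := by
    linear_combination hroot - (1 - a - a ^ 2) * pow_add r p m
  have hkey : 1 ≤ (2 + a) * r ^ p :=
    one_le_two_add_mul_of_mul_eq_one_sub ha1 (pow_pos hr0 m)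
      (pow_le_one₀ hr0.le hr1.le) (pow_le_one₀ hr0.le hr1.le) hfactored
  refine Real.rpow_one_div_natCast_le_of_le_pow (by positivity) hr0.le (by omega) ?_
  rwa [div_le_iff₀' (by linarith)]

theorem stmt_2 (p m : ℕ) (hp : 1 ≤ p) (hm : m ≤ p) (a : ℝ) (ha : a ∈ Set.Ico (0:ℝ) 1)
    (r : ℝ) (hr : r ∈ Set.Ioo (0:ℝ) 1)
    (hroot : (1 - a - a ^ 2) * r ^ (p + m) + r ^ p + a * r ^ m - 1 = 0) :
    (1 / (2 + a)) ^ ((1:ℝ) / p) ≤ r :=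
  stmt_2_general p m hp a ha r hr hroot
end

section
/- Let a ∈ [0,1), N ≥ 1 an integer, and r ∈ [0,1). If 2r^N + r − 1 ≤ 0, then a + (1 − a²)·r^N/(1 − r) ≤ 1. -/
lemma one_sub_sq_mul_le_of_two_mul_le {a s t : ℝ} (ha : a ≤ 1) (hs : 0 ≤ s) (h : 2 * s ≤ t) :
    (1 - a ^ 2) * s ≤ (1 - a) * t :=
  calc (1 - a ^ 2) * s = (1 - a) * ((1 + a) * s) := by ring
    _ ≤ (1 - a) * (2 * s) := by gcongr; linarith
    _ ≤ (1 - a) * t := by gcongr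

theorem stmt_3_general (a : ℝ) (ha : a ∈ Set.Ico (0:ℝ) 1) (N : ℕ)
    (r : ℝ) (hr : r ∈ Set.Ico (0:ℝ) 1)
    (h : 2 * r ^ N + r - 1 ≤ 0) :
    a + (1 - a ^ 2) * r ^ N / (1 - r) ≤ 1 := by
  have hr1 : 0 < 1 - r := sub_pos.2 hr.2
  have key : (1 - a ^ 2) * r ^ N / (1 - r) ≤ 1 - a := by
    rw [div_le_iff₀ hr1]
    exact one_sub_sq_mul_le_of_two_mul_le ha.2.le (pow_nonneg hr.1 N) (by linarith)
  linarith

theorem stmt_3 (a : ℝ) (ha : a ∈ Set.Ico (0:ℝ) 1) (N : ℕ) (hN : 1 ≤ N)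
    (r : ℝ) (hr : r ∈ Set.Ico (0:ℝ) 1)
    (h : 2 * r ^ N + r - 1 ≤ 0) :
    a + (1 - a ^ 2) * r ^ N / (1 - r) ≤ 1 :=
  stmt_3_general a ha N r hr h
end

section
/- Let a ∈ [0,1), m ≥ 1, and N an integer with m + 1 ≤ N ≤ 2m, and r ∈ (0,1). If 4r^N + r^{2+2m−N} − 2r^{1+2m−N} + r^{2m−N} + 4r − 4 ≤ 0, then a·r^m + (1 − a²)·r^N/(1 − r) ≤ 1. -/
/-!
Put `s = r ^ N`, `k = 2m - N`, so that `r ^ (2m) = s * r ^ k`. Multiplied by `1 - r`, the claim says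
that the quadratic `a ↦ a * r ^ m * (1 - r) + (1 - a ^ 2) * s` stays below `1 - r`. Its maximum over
all real `a` is `s + r ^ k * (1 - r) ^ 2 / 4`, and `φ₃(r) ≤ 0` is exactly the statement that this
maximum is at most `1 - r`.
-/

theorem mul_add_one_sub_sq_mul_le {s : ℝ} (hs : 0 < s) (a b : ℝ) :
    a * b + (1 - a ^ 2) * s ≤ s + b ^ 2 / (4 * s) := by
  have hsq : s + b ^ 2 / (4 * s) - (a * b + (1 - a ^ 2) * s) = (2 * a * s - b) ^ 2 / (4 * s) := by
    field_simp
    ring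
  rw [← sub_nonneg, hsq]
  positivity

theorem sq_pow_mul_div_pow {r : ℝ} (hr : r ≠ 0) {m N : ℕ} (hN : N ≤ 2 * m) (c : ℝ) :
    (r ^ m * c) ^ 2 / (4 * r ^ N) = r ^ (2 * m - N) * c ^ 2 / 4 := by
  have hpow : r ^ (2 * m) = r ^ N * r ^ (2 * m - N) := by
    rw [← pow_add, Nat.add_sub_cancel' hN]
  field_simp
  rw [← pow_mul, mul_comm m 2, hpow]
  ring

theorem stmt_5_general (a : ℝ) (m N : ℕ)
    (hN2 : N ≤ 2 * m) (r : ℝ) (hr : r ∈ Set.Ioo (0:ℝ) 1)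
    (h : 4 * r ^ N + r ^ (2 + 2 * m - N) - 2 * r ^ (1 + 2 * m - N)
        + r ^ (2 * m - N) + 4 * r - 4 ≤ 0) :
    a * r ^ m + (1 - a ^ 2) * r ^ N / (1 - r) ≤ 1 := by
  obtain ⟨hr0, hr1⟩ := hr
  have hφ : r ^ N + r ^ (2 * m - N) * (1 - r) ^ 2 / 4 ≤ 1 - r := by
    rw [show 2 + 2 * m - N = 2 * m - N + 2 by omega,
      show 1 + 2 * m - N = 2 * m - N + 1 by omega] at h
    linear_combination h / 4
  have hquad := mul_add_one_sub_sq_mul_le (pow_pos hr0 N) a (r ^ m * (1 - r))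
  rw [sq_pow_mul_div_pow hr0.ne' hN2] at hquad
  have hsplit : a * r ^ m + (1 - a ^ 2) * r ^ N / (1 - r)
      = (a * (r ^ m * (1 - r)) + (1 - a ^ 2) * r ^ N) / (1 - r) := by
    field_simp [(sub_pos.2 hr1).ne']
  rw [hsplit, div_le_one (sub_pos.2 hr1)]
  linarith

theorem stmt_5 (a : ℝ) (ha : a ∈ Set.Ico (0:ℝ) 1) (m N : ℕ) (hm : 1 ≤ m)
    (hN1 : m + 1 ≤ N) (hN2 : N ≤ 2 * m) (r : ℝ) (hr : r ∈ Set.Ioo (0:ℝ) 1)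
    (h : 4 * r ^ N + r ^ (2 + 2 * m - N) - 2 * r ^ (1 + 2 * m - N)
        + r ^ (2 * m - N) + 4 * r - 4 ≤ 0) :
    a * r ^ m + (1 - a ^ 2) * r ^ N / (1 - r) ≤ 1 :=
  stmt_5_general a m N hN2 r hr h
end

section
/- Let a ∈ [0,1) and r ∈ (0,1) with a·r < 1. Then the series identity holds: a·r^m + (1 − a²)·∑_{s=1}^∞ a^{s−1}·r^{sk+m} + ((r^{−m}/(1+a)) + r^{k−m}/(1 − r^k))·(1 − a²)²·∑_{s=1}^∞ a^{2s−2}·r^{2sk+2m} = r^m·(a + (1 − a²)·r^k/(1 − r^k)), for all integers k ≥ 1 and m ≥ 0. -/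
/-! Both series are geometric, with ratios `a r^k` and `(a r^k)^2`, so they sum to
`r^(k+m) / (1 - a r^k)` and `r^(2k+2m) / (1 - a² r^(2k))`. What remains is a rational identity
in `a`, `r^k` and `r^m`. -/

theorem tsum_pow_mul_pow_mul_add {K : Type*} [NormedField K] [CompleteSpace K] {a r : K} {k : ℕ}
    (h : ‖a * r ^ k‖ < 1) (n : ℕ) :
    ∑' s : ℕ, a ^ s * r ^ (s * k + n) = r ^ n / (1 - a * r ^ k) := by
  have hterm (s : ℕ) : a ^ s * r ^ (s * k + n) = (a * r ^ k) ^ s * r ^ n := by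
    rw [pow_add, mul_pow, pow_mul', mul_assoc]
  rw [tsum_congr hterm, tsum_mul_right, tsum_geometric_of_norm_lt_one h, div_eq_inv_mul]

theorem stmt_7_general (a : ℝ) (ha : a ∈ Set.Ico (0:ℝ) 1) (r : ℝ) (hr : r ∈ Set.Ioo (0:ℝ) 1)
    (k m : ℕ) (hk : 1 ≤ k) :
    a * r ^ m + (1 - a ^ 2) * ∑' s : ℕ, a ^ s * r ^ ((s + 1) * k + m) +
      (r ^ (-(m : ℤ)) / (1 + a) + r ^ ((k : ℤ) - (m : ℤ)) / (1 - r ^ k)) *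
        ((1 - a ^ 2) ^ 2 * ∑' s : ℕ, a ^ (2 * s) * r ^ (2 * (s + 1) * k + 2 * m)) =
      r ^ m * (a + (1 - a ^ 2) * r ^ k / (1 - r ^ k)) := by
  obtain ⟨ha0, ha1⟩ := ha
  obtain ⟨hr0, hr1⟩ := hr
  set t := r ^ k with ht
  have ht0 : 0 < t := pow_pos hr0 k
  have ht1 : t < 1 := pow_lt_one₀ hr0.le hr1 (by omega)
  have hat0 : 0 ≤ a * t := by positivity
  have hat1 : a * t < 1 := by nlinarith
  have hat : ‖a * t‖ < 1 := by rwa [Real.norm_of_nonneg hat0]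
  have hat2 : ‖a ^ 2 * r ^ (2 * k)‖ < 1 := by
    rw [pow_mul', ← ht, ← mul_pow, norm_pow]
    exact pow_lt_one₀ (norm_nonneg _) hat two_ne_zero
  have hsum₁ : ∑' s : ℕ, a ^ s * r ^ ((s + 1) * k + m) = t * r ^ m / (1 - a * t) := by
    simp_rw [add_mul, one_mul, add_assoc]
    rw [tsum_pow_mul_pow_mul_add hat, pow_add]
  have hsum₂ : ∑' s : ℕ, a ^ (2 * s) * r ^ (2 * (s + 1) * k + 2 * m) =
      (t * r ^ m) ^ 2 / ((1 - a * t) * (1 + a * t)) := by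
    have hexp (s : ℕ) : 2 * (s + 1) * k + 2 * m = s * (2 * k) + 2 * (k + m) := by ring
    simp_rw [hexp, pow_mul]
    rw [tsum_pow_mul_pow_mul_add hat2, pow_mul', pow_mul', pow_add, ← ht]
    ring
  have hrm : 0 < r ^ m := pow_pos hr0 m
  rw [hsum₁, hsum₂, zpow_neg, zpow_sub₀ hr0.ne', zpow_natCast, zpow_natCast, ← ht]
  have : 1 - a * t ≠ 0 := by linarith
  have : 1 + a * t ≠ 0 := by positivity
  have : 1 - t ≠ 0 := by linarith
  have : 1 + a ≠ 0 := by linarith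
  field_simp
  ring

theorem stmt_7 (a : ℝ) (ha : a ∈ Set.Ico (0:ℝ) 1) (r : ℝ) (hr : r ∈ Set.Ioo (0:ℝ) 1)
    (har : a * r < 1) (k m : ℕ) (hk : 1 ≤ k) :
    a * r ^ m + (1 - a ^ 2) * ∑' s : ℕ, a ^ s * r ^ ((s + 1) * k + m) +
      (r ^ (-(m : ℤ)) / (1 + a) + r ^ ((k : ℤ) - (m : ℤ)) / (1 - r ^ k)) *
        ((1 - a ^ 2) ^ 2 * ∑' s : ℕ, a ^ (2 * s) * r ^ (2 * (s + 1) * k + 2 * m)) =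
      r ^ m * (a + (1 - a ^ 2) * r ^ k / (1 - r ^ k)) :=
  stmt_7_general a ha r hr k m hk
end

section
/- Let b ∈ [0,1) and r ∈ (0,1). Then b·r + (1 − b²)·r²/(1 − r) ≤ 1 whenever r ≤ 3/5. -/
theorem one_sub_sq_mul_sq_le_of_le_three_fifths (b : ℝ) {r : ℝ} (hr : -1 ≤ r) (h : r ≤ 3 / 5) :
    (1 - b ^ 2) * r ^ 2 ≤ (1 - b * r) * (1 - r) := by
  -- Completing the square in `b`; the remainder is nonnegative exactly when `-1 ≤ r ≤ 3 / 5`.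
  have hsq : 4 * ((1 - b * r) * (1 - r) - (1 - b ^ 2) * r ^ 2)
      = (2 * b * r - (1 - r)) ^ 2 + (3 - 5 * r) * (1 + r) := by ring
  have hdisc : 0 ≤ (3 - 5 * r) * (1 + r) := mul_nonneg (by linarith) (by linarith)
  linarith [sq_nonneg (2 * b * r - (1 - r))]

theorem stmt_10_general (b : ℝ) (r : ℝ) (hr : r ∈ Set.Ioo (0:ℝ) 1)
    (h : r ≤ 3 / 5) :
    b * r + (1 - b ^ 2) * r ^ 2 / (1 - r) ≤ 1 := by
  obtain ⟨hr0, hr1⟩ := hr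
  have key : (1 - b ^ 2) * r ^ 2 / (1 - r) ≤ 1 - b * r :=
    (div_le_iff₀ (sub_pos.2 hr1)).2
      (one_sub_sq_mul_sq_le_of_le_three_fifths b (by linarith) h)
  linarith

theorem stmt_10 (b : ℝ) (hb : b ∈ Set.Ico (0:ℝ) 1) (r : ℝ) (hr : r ∈ Set.Ioo (0:ℝ) 1)
    (h : r ≤ 3 / 5) :
    b * r + (1 - b ^ 2) * r ^ 2 / (1 - r) ≤ 1 :=
  stmt_10_general b r hr h
end

section
/- Let k ≥ 1 and 0 ≤ m ≤ k. The equation −6r^{k−m} + r^{2(k−m)} + 8r^{2k} + 1 = 0 has at least one root in (0,1); moreover when k = 1, m = 0 the maximal root in (0,1) is r = 1/3 (since −6r + r² + 8r² + 1 = 9r² − 6r + 1 = (3r−1)²). -/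
/-!
Write `p(r) = -6 r^a + r^(2a) + 8 r^(2n) + 1` with `a = k - m ≤ n = k`. Pick `r₀ ∈ (0,1)` with
`r₀^n = 1/3`. Then `t = r₀^a ∈ [1/3, 1]` and `p(r₀) = (t - 1/3)(t - 17/3) ≤ 0`, while
`p(1) = 4`, so the intermediate value theorem gives a root in `[r₀, 1)`. For `k = 1, m = 0` the equation is
`(3r - 1)^2 = 0`.
-/

open Set

noncomputable section

def bohrPoly (a n : ℕ) (r : ℝ) : ℝ :=
  -6 * r ^ a + r ^ (2 * a) + 8 * r ^ (2 * n) + 1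

lemma continuous_bohrPoly (a n : ℕ) : Continuous (bohrPoly a n) := by
  unfold bohrPoly; fun_prop

lemma bohrPoly_one (a n : ℕ) : bohrPoly a n 1 = 4 := by
  norm_num [bohrPoly]

lemma bohrPoly_nonpos {a n : ℕ} {r : ℝ} (ha : a ≤ n) (hr₀ : 0 ≤ r) (hr₁ : r ≤ 1)
    (hrn : r ^ n = 1 / 3) : bohrPoly a n r ≤ 0 := by
  have ht₀ : 1 / 3 ≤ r ^ a := hrn ▸ pow_le_pow_of_le_one hr₀ hr₁ ha
  have ht₁ : r ^ a ≤ 1 := pow_le_one₀ hr₀ hr₁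
  have h : bohrPoly a n r = (r ^ a - 1 / 3) * (r ^ a - 17 / 3) := by
    rw [bohrPoly, mul_comm 2 a, mul_comm 2 n, pow_mul, pow_mul, hrn]; ring
  rw [h]
  exact mul_nonpos_of_nonneg_of_nonpos (by linarith) (by linarith)

lemma exists_mem_Ioo_pow_eq {n : ℕ} (hn : n ≠ 0) {c : ℝ} (hc : c ∈ Ioo (0 : ℝ) 1) :
    ∃ r ∈ Ioo (0 : ℝ) 1, r ^ n = c :=
  ⟨c ^ (n⁻¹ : ℝ),
    ⟨Real.rpow_pos_of_pos hc.1 _, Real.rpow_lt_one hc.1.le hc.2 (by positivity)⟩,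
    Real.rpow_inv_natCast_pow hc.1.le hn⟩

lemma exists_bohrPoly_eq_zero {a n : ℕ} (ha : a ≤ n) (hn : n ≠ 0) :
    ∃ r ∈ Ioo (0 : ℝ) 1, bohrPoly a n r = 0 := by
  obtain ⟨r₀, hr₀, hr₀n⟩ := exists_mem_Ioo_pow_eq hn (c := 1 / 3) (by norm_num)
  have hneg : bohrPoly a n r₀ ≤ 0 := bohrPoly_nonpos ha hr₀.1.le hr₀.2.le hr₀n
  obtain ⟨r, hr, hroot⟩ :=
    intermediate_value_Icc hr₀.2.le (continuous_bohrPoly a n).continuousOn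
    ⟨hneg, by rw [bohrPoly_one]; norm_num⟩
  refine ⟨r, ⟨hr₀.1.trans_le hr.1, hr.2.lt_of_ne ?_⟩, hroot⟩
  rintro rfl
  norm_num [bohrPoly_one] at hroot

theorem stmt_17_general (k m : ℕ) (hk : 1 ≤ k) :
    (∃ r : ℝ, r ∈ Set.Ioo (0:ℝ) 1 ∧
      -6 * r ^ (k - m) + r ^ (2 * (k - m)) + 8 * r ^ (2 * k) + 1 = 0) ∧
    IsGreatest {r : ℝ | r ∈ Set.Ioo (0:ℝ) 1 ∧
      -6 * r + r ^ 2 + 8 * r ^ 2 + 1 = 0} (1 / 3) := by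
  refine ⟨exists_bohrPoly_eq_zero (Nat.sub_le k m) (by omega),
    ⟨⟨by norm_num, by norm_num⟩, by norm_num⟩, ?_⟩
  rintro r ⟨-, hr⟩
  have hsq : (3 * r - 1) ^ 2 = 0 := by linear_combination hr
  linarith [pow_eq_zero_iff (n := 2) two_ne_zero |>.mp hsq]

theorem stmt_17 (k m : ℕ) (hk : 1 ≤ k) (hm : m ≤ k) :
    (∃ r : ℝ, r ∈ Set.Ioo (0:ℝ) 1 ∧
      -6 * r ^ (k - m) + r ^ (2 * (k - m)) + 8 * r ^ (2 * k) + 1 = 0) ∧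
    IsGreatest {r : ℝ | r ∈ Set.Ioo (0:ℝ) 1 ∧
      -6 * r + r ^ 2 + 8 * r ^ 2 + 1 = 0} (1 / 3) :=
  stmt_17_general k m hk

end
end
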